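/- Let f be a measurable non-negative function on (0,∞)×(0,T), K a non-negative measurable symmetric kernel on (0,∞)², and φ : (0,∞) → ℝ bounded measurable. If (ς,ϱ,s) ↦ K(ς,ϱ)f(ς,s)f(ϱ,s) is integrable on (0,∞)²×(0,T), then ∫₀^τ ∫₀^∞ ∫₀^ς φ̃(ς,ϱ) K(ς,ϱ) f(ς,s) f(ϱ,s) dϱ dς ds = ∫₀^∞ φ(ς) [ ∫₀^τ ∫₀^∞ K(ς+ϱ,ϱ) f(ς+ϱ,s) f(ϱ,s) dϱ ds − ∫₀^τ ∫₀^∞ K(ς,ϱ) f(ς,s) f(ϱ,s) dϱ ds ] dς, where φ̃(ς,ϱ) = φ(ς−ϱ) − φ(ς) − φ(ϱ). -/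

import Mathlib

/-!
Write the integrand on the triangle `0 < ϱ < ς` as `φ̃(ς, ϱ) · g(ς, ϱ)`, where
`g(ς, ϱ) = K(ς, ϱ) f(ς) f(ϱ)` is symmetric, and split `φ̃(ς, ϱ) = φ(ς - ϱ) - φ ς - φ ϱ` into its
three terms. The shear `(ς, ϱ) ↦ (ς + ϱ, ϱ)` maps the quadrant `ς, ϱ > 0` measure-preservingly
onto the triangle and turns the first term into the gain integral of `φ ς · g(ς + ϱ, ϱ)` over the quadrant.
By symmetry of `g`, the reflection in the diagonal turns the third term into the integral of
`φ ς · g(ς, ϱ)` over the mirror triangle, and together with the second term this fills the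
quadrant up to the null diagonal: the loss integral. The time variable is carried along as a
parameter throughout, and Fubini converts between integrals over regions and the iterated
integrals of the statement.
-/

open MeasureTheory Set

def triangle : Set (ℝ × ℝ) := {q | 0 < q.2 ∧ q.2 < q.1}

def quadrant : Set (ℝ × ℝ) := Ioi 0 ×ˢ Ioi 0

-- the paper's `φ̃`
def coagWeight (φ : ℝ → ℝ) (q : ℝ × ℝ) : ℝ := φ (q.1 - q.2) - φ q.1 - φ q.2

lemma measurableSet_triangle : MeasurableSet triangle :=
  (measurableSet_lt measurable_const measurable_snd).inter
    (measurableSet_lt measurable_snd measurable_fst)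

lemma volume_restrict_quadrant :
    volume.restrict quadrant = (volume.restrict (Ioi (0:ℝ))).prod (volume.restrict (Ioi 0)) := by
  rw [quadrant, Measure.volume_eq_prod, Measure.prod_restrict]

def shear : (ℝ × ℝ) ≃ᵐ ℝ × ℝ where
  toFun q := (q.1 + q.2, q.2)
  invFun q := (q.1 - q.2, q.2)
  left_inv q := by simp
  right_inv q := by simp
  measurable_toFun := (measurable_fst.add measurable_snd).prodMk measurable_snd
  measurable_invFun := (measurable_fst.sub measurable_snd).prodMk measurable_snd

@[simp]
lemma shear_apply (q : ℝ × ℝ) : shear q = (q.1 + q.2, q.2) := rfl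

lemma shear_preimage_triangle : shear ⁻¹' triangle = quadrant := by
  ext ⟨x, y⟩
  simp only [triangle, quadrant, mem_preimage, shear_apply, mem_ofPred_eq, mem_prod, mem_Ioi]
  constructor <;> rintro ⟨h₁, h₂⟩ <;> constructor <;> linarith

lemma measurePreserving_shear_restrict :
    MeasurePreserving shear (volume.restrict quadrant) (volume.restrict triangle) := by
  have h : MeasurePreserving shear volume volume := by
    rw [Measure.volume_eq_prod]
    exact measurePreserving_add_prod volume volume
  simpa only [shear_preimage_triangle] using
    h.restrict_preimage_emb shear.measurableEmbedding triangle

lemma measurePreserving_swap_restrict :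
    MeasurePreserving Prod.swap (volume.restrict (Prod.swap ⁻¹' triangle))
      (volume.restrict triangle) :=
  Measure.measurePreserving_swap.restrict_preimage_emb
    MeasurableEquiv.prodComm.measurableEmbedding triangle

lemma volume_diagonal_eq_zero : volume {q : ℝ × ℝ | q.1 = q.2} = 0 := by
  rw [Measure.volume_eq_prod,
    Measure.measure_prod_null (measurableSet_eq_fun measurable_fst measurable_snd)]
  refine Filter.Eventually.of_forall fun x => ?_
  simp [preimage]

lemma restrict_triangle_add_restrict_swap :
    volume.restrict triangle + volume.restrict (Prod.swap ⁻¹' triangle)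
      = volume.restrict quadrant := by
  have hdisj : Disjoint triangle (Prod.swap ⁻¹' triangle) :=
    disjoint_left.2 fun q h h' => (h.2.trans h'.2).false
  rw [← Measure.restrict_union hdisj (measurableSet_triangle.preimage measurable_swap)]
  refine Measure.restrict_congr_set
    (ae_eq_set.2 ⟨?_, measure_mono_null ?_ volume_diagonal_eq_zero⟩)
  · rw [sdiff_eq_empty.2]
    · exact measure_empty
    rintro ⟨x, y⟩ (⟨h₁, h₂⟩ | ⟨h₁, h₂⟩)
    exacts [⟨h₁.trans h₂, h₁⟩, ⟨h₁, h₁.trans h₂⟩]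
  · rintro ⟨x, y⟩ ⟨⟨hx, hy⟩, hne⟩
    by_contra hxy
    rcases lt_or_gt_of_ne hxy with h | h
    exacts [hne (Or.inr ⟨hx, h⟩), hne (Or.inl ⟨hy, h⟩)]

lemma setIntegral_triangle {E : Type*} [NormedAddCommGroup E] [NormedSpace ℝ E]
    {g : ℝ × ℝ → E} (hg : IntegrableOn g triangle) :
    ∫ q in triangle, g q = ∫ x in Ioi 0, ∫ y in Ioo 0 x, g (x, y) := by
  have hslice (x : ℝ) : ∫ y, triangle.indicator g (x, y) = ∫ y in Ioo 0 x, g (x, y) := by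
    rw [← integral_indicator measurableSet_Ioo]
    rfl
  rw [← integral_indicator measurableSet_triangle, Measure.volume_eq_prod,
    integral_prod _ ((integrable_indicator_iff measurableSet_triangle).2 hg)]
  simp only [hslice]
  refine (setIntegral_eq_integral_of_forall_compl_eq_zero fun x hx => ?_).symm
  rw [Ioo_eq_empty hx, Measure.restrict_empty, integral_zero_measure]

lemma MeasureTheory.IntegrableOn.reassoc_prod_restrict {α β γ E : Type*} [MeasureSpace α]
    [MeasureSpace β] [MeasureSpace γ] [NormedAddCommGroup E] [SFinite (volume : Measure α)]
    [SFinite (volume : Measure β)] [SFinite (volume : Measure γ)] {g : α × β × γ → E}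
    {A : Set α} {B : Set β} {C : Set γ} (hg : IntegrableOn g (A ×ˢ B ×ˢ C)) :
    Integrable (fun p => g (p.1.1, p.1.2, p.2))
      ((volume.restrict (A ×ˢ B)).prod (volume.restrict C)) := by
  have hassoc := measurePreserving_prodAssoc (volume : Measure α) (volume : Measure β)
    (volume : Measure γ)
  have := (hassoc.integrableOn_comp_preimage MeasurableEquiv.prodAssoc.measurableEmbedding).2 hg
  simp only [MeasurableEquiv.prodAssoc, MeasurableEquiv.coe_mk, Equiv.prod_assoc_preimage] at this
  rw [Measure.prod_restrict]
  exact this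

lemma MeasureTheory.Integrable.bdd_comp_mul {α : Type*} [MeasurableSpace α] {μ : Measure α}
    {φ : ℝ → ℝ} (hφm : Measurable φ) {C : ℝ} (hC : ∀ x, |φ x| ≤ C) {u : α → ℝ}
    (hu : Measurable u) {g : α → ℝ} (hg : Integrable g μ) :
    Integrable (fun p => φ (u p) * g p) μ :=
  hg.bdd_mul (hφm.comp hu).aestronglyMeasurable (ae_of_all _ fun p => hC (u p))

section Iterated

variable {α β γ E : Type*} [MeasurableSpace α] [MeasurableSpace β] [MeasurableSpace γ]
  [NormedAddCommGroup E] {μ₁ : Measure α} {μ₂ : Measure β} {ν : Measure γ}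
  [SFinite μ₂] [SFinite ν] {H : (α × β) × γ → E}

lemma MeasureTheory.Integrable.prod_reassoc (hH : Integrable H ((μ₁.prod μ₂).prod ν)) :
    Integrable (fun z : α × β × γ => H ((z.1, z.2.1), z.2.2)) (μ₁.prod (μ₂.prod ν)) :=
  ((measurePreserving_prodAssoc μ₁ μ₂ ν).symm MeasurableEquiv.prodAssoc).integrable_comp_emb
    MeasurableEquiv.prodAssoc.symm.measurableEmbedding |>.2 hH

variable [NormedSpace ℝ E] [SFinite μ₁]

lemma ae_integral_prod_reassoc_eq (hH : Integrable H ((μ₁.prod μ₂).prod ν)) :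
    ∀ᵐ x ∂μ₁, ∫ w, H ((x, w.1), w.2) ∂(μ₂.prod ν) = ∫ s, ∫ y, H ((x, y), s) ∂μ₂ ∂ν := by
  filter_upwards [hH.prod_reassoc.prod_right_ae] with x hx
  exact integral_prod_symm _ hx

lemma integral_prod_prod_eq_iterated (hH : Integrable H ((μ₁.prod μ₂).prod ν)) :
    ∫ p, H p ∂((μ₁.prod μ₂).prod ν) = ∫ x, ∫ s, ∫ y, H ((x, y), s) ∂μ₂ ∂ν ∂μ₁ := by
  rw [← ((measurePreserving_prodAssoc μ₁ μ₂ ν).symm MeasurableEquiv.prodAssoc).integral_comp']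
  exact (integral_prod _ hH.prod_reassoc).trans
    (integral_congr_ae (ae_integral_prod_reassoc_eq hH))

lemma MeasureTheory.Integrable.integral_prod_prod_iterated
    (hH : Integrable H ((μ₁.prod μ₂).prod ν)) :
    Integrable (fun x => ∫ s, ∫ y, H ((x, y), s) ∂μ₂ ∂ν) μ₁ :=
  hH.prod_reassoc.integral_prod_left.congr (ae_integral_prod_reassoc_eq hH)

end Iterated

section WeakForm

variable {S E : Type*} [MeasurableSpace S] (ν : Measure S) [SFinite ν] [NormedAddCommGroup E]

lemma restrict_quadrant_prod_eq_add :
    (volume.restrict quadrant).prod ν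
      = (volume.restrict triangle).prod ν + (volume.restrict (Prod.swap ⁻¹' triangle)).prod ν := by
  rw [← Measure.add_prod, restrict_triangle_add_restrict_swap]

lemma restrict_triangle_prod_le :
    (volume.restrict triangle).prod ν ≤ (volume.restrict quadrant).prod ν :=
  restrict_quadrant_prod_eq_add ν ▸ Measure.le_add_right le_rfl

lemma MeasureTheory.Integrable.comp_shear {h : (ℝ × ℝ) × S → E}
    (hh : Integrable h ((volume.restrict triangle).prod ν)) :
    Integrable (fun p => h (shear p.1, p.2)) ((volume.restrict quadrant).prod ν) :=
  ((measurePreserving_shear_restrict.prod (MeasurePreserving.id ν)).integrable_comp_emb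
    (shear.prodCongr (MeasurableEquiv.refl S)).measurableEmbedding).2 hh

lemma MeasureTheory.Integrable.coagWeight_mul {μ : Measure ((ℝ × ℝ) × S)} {φ : ℝ → ℝ}
    (hφm : Measurable φ) {C : ℝ} (hC : ∀ x, |φ x| ≤ C) {h : (ℝ × ℝ) × S → ℝ}
    (hh : Integrable h μ) :
    Integrable (fun p => coagWeight φ p.1 * h p) μ := by
  simp only [coagWeight, sub_mul]
  exact ((hh.bdd_comp_mul (u := fun p => p.1.1 - p.1.2) hφm hC (by fun_prop)).sub'
    (hh.bdd_comp_mul hφm hC measurable_fst.fst)).sub' (hh.bdd_comp_mul hφm hC measurable_fst.snd)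

variable [NormedSpace ℝ E]

lemma integral_triangle_prod_eq_shear (F : (ℝ × ℝ) × S → E) :
    ∫ p, F p ∂((volume.restrict triangle).prod ν)
      = ∫ p, F (shear p.1, p.2) ∂((volume.restrict quadrant).prod ν) :=
  ((measurePreserving_shear_restrict.prod (MeasurePreserving.id ν)).integral_comp'
    (f := shear.prodCongr (MeasurableEquiv.refl S)) F).symm

lemma integral_triangle_prod_eq_swap (F : (ℝ × ℝ) × S → E) :
    ∫ p, F p ∂((volume.restrict triangle).prod ν)
      = ∫ p, F (p.1.swap, p.2) ∂((volume.restrict (Prod.swap ⁻¹' triangle)).prod ν) :=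
  ((measurePreserving_swap_restrict.prod (MeasurePreserving.id ν)).integral_comp'
    (f := MeasurableEquiv.prodComm.prodCongr (MeasurableEquiv.refl S)) F).symm

lemma integral_triangle_prod_eq_iterated {F : (ℝ × ℝ) × S → E}
    (hF : Integrable F ((volume.restrict triangle).prod ν)) :
    ∫ p, F p ∂((volume.restrict triangle).prod ν)
      = ∫ s, (∫ x in Ioi 0, ∫ y in Ioo 0 x, F ((x, y), s)) ∂ν := by
  rw [integral_prod_symm _ hF]
  refine integral_congr_ae ?_
  filter_upwards [hF.prod_left_ae] with s hs using setIntegral_triangle hs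

theorem integral_triangle_coagWeight_mul {φ : ℝ → ℝ} (hφm : Measurable φ) {C : ℝ}
    (hC : ∀ x, |φ x| ≤ C) {h : (ℝ × ℝ) × S → ℝ}
    (hh : Integrable h ((volume.restrict quadrant).prod ν))
    (hsym : ∀ x y s, h ((x, y), s) = h ((y, x), s)) :
    ∫ p, coagWeight φ p.1 * h p ∂((volume.restrict triangle).prod ν)
      = ∫ p, φ p.1.1 * h (shear p.1, p.2) ∂((volume.restrict quadrant).prod ν)
        - ∫ p, φ p.1.1 * h p ∂((volume.restrict quadrant).prod ν) := by
  rw [restrict_quadrant_prod_eq_add, integrable_add_measure] at hh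
  obtain ⟨hΔ, hΔ'⟩ := hh
  have gain := integral_triangle_prod_eq_shear ν (fun p => φ (p.1.1 - p.1.2) * h p)
  have loss := integral_triangle_prod_eq_swap ν (fun p => φ p.1.2 * h p)
  have h_swap : ∀ q : (ℝ × ℝ) × S, h (q.1.swap, q.2) = h q := fun ⟨⟨x, y⟩, s⟩ => hsym y x s
  simp only [shear_apply, add_sub_cancel_right, Prod.snd_swap, h_swap] at gain loss
  have hint₁ := hΔ.bdd_comp_mul (u := fun p => p.1.1 - p.1.2) hφm hC (by fun_prop)
  have hint₂ := hΔ.bdd_comp_mul hφm hC measurable_fst.fst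
  have hint₃ := hΔ.bdd_comp_mul hφm hC measurable_fst.snd
  simp only [coagWeight, sub_mul, shear_apply]
  rw [integral_sub (hint₁.sub' hint₂) hint₃, integral_sub hint₁ hint₂, gain, loss,
    restrict_quadrant_prod_eq_add,
    integral_add_measure hint₂ (hΔ'.bdd_comp_mul hφm hC measurable_fst.fst)]
  ring

theorem integral_coagWeight_mul_eq_gain_sub_loss {φ : ℝ → ℝ} (hφm : Measurable φ) {C : ℝ}
    (hC : ∀ x, |φ x| ≤ C) {h : (ℝ × ℝ) × S → ℝ}
    (hh : Integrable h ((volume.restrict quadrant).prod ν))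
    (hsym : ∀ x y s, h ((x, y), s) = h ((y, x), s)) :
    ∫ s, (∫ x in Ioi 0, ∫ y in Ioo 0 x, coagWeight φ (x, y) * h ((x, y), s)) ∂ν
      = ∫ x in Ioi 0, φ x *
          ((∫ s, (∫ y in Ioi 0, h ((x + y, y), s)) ∂ν)
            - ∫ s, (∫ y in Ioi 0, h ((x, y), s)) ∂ν) := by
  have hΔ := hh.mono_measure (restrict_triangle_prod_le ν)
  have hshear := hΔ.comp_shear ν
  rw [← integral_triangle_prod_eq_iterated ν (hΔ.coagWeight_mul hφm hC),
    integral_triangle_coagWeight_mul ν hφm hC hh hsym]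
  rw [volume_restrict_quadrant] at hh hshear ⊢
  have hgain := hshear.bdd_comp_mul hφm hC measurable_fst.fst
  have hloss := hh.bdd_comp_mul hφm hC measurable_fst.fst
  rw [integral_prod_prod_eq_iterated hgain, integral_prod_prod_eq_iterated hloss,
    ← integral_sub hgain.integral_prod_prod_iterated hloss.integral_prod_prod_iterated]
  simp only [integral_const_mul, mul_sub, shear_apply]

end WeakForm

theorem stmt_8_general (T τ : ℝ) (hτT : τ ≤ T)
    (f : ℝ → ℝ → ℝ) (K : ℝ → ℝ → ℝ) (hKsym : ∀ ς ϱ, K ς ϱ = K ϱ ς)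
    (φ : ℝ → ℝ) (hφm : Measurable φ) (hφb : ∃ C, ∀ ς, |φ ς| ≤ C)
    (hint : IntegrableOn (fun p : ℝ × ℝ × ℝ => K p.1 p.2.1 * f p.1 p.2.2 * f p.2.1 p.2.2)
      (Set.Ioi 0 ×ˢ Set.Ioi 0 ×ˢ Set.Ioo 0 T)) :
    ∫ s in Set.Ioc (0:ℝ) τ, ∫ ς in Set.Ioi (0:ℝ), ∫ ϱ in Set.Ioo 0 ς,
        (φ (ς - ϱ) - φ ς - φ ϱ) * (K ς ϱ * f ς s * f ϱ s)
      = ∫ ς in Set.Ioi (0:ℝ), φ ς *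
          ((∫ s in Set.Ioc (0:ℝ) τ, ∫ ϱ in Set.Ioi (0:ℝ),
              K (ς + ϱ) ϱ * f (ς + ϱ) s * f ϱ s)
            - ∫ s in Set.Ioc (0:ℝ) τ, ∫ ϱ in Set.Ioi (0:ℝ), K ς ϱ * f ς s * f ϱ s) := by
  obtain ⟨C, hC⟩ := hφb
  have hIoc : Ioc 0 τ ≤ᵐ[volume] Ioo 0 T :=
    (Ioc_subset_Ioc_right hτT).eventuallyLE.trans Ioo_ae_eq_Ioc.symm.le
  have hG := hint.reassoc_prod_restrict.mono_measure
    (Measure.prod_mono le_rfl (Measure.restrict_mono_ae hIoc))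
  refine integral_coagWeight_mul_eq_gain_sub_loss _ hφm hC hG fun x y s => ?_
  rw [hKsym]
  ring

/-- Weak (moment) formulation identity for the RBK coagulation operator: integrating the
collision operator against a bounded test function `φ` gives the triangular integral with
weight `φ̃(ς,ϱ) = φ(ς−ϱ) − φ(ς) − φ(ϱ)`. -/
theorem stmt_8 (T τ : ℝ) (hτ : 0 < τ) (hτT : τ ≤ T)
    (f : ℝ → ℝ → ℝ) (hf : Measurable (Function.uncurry f)) (hfnn : ∀ ς s, 0 ≤ f ς s)
    (K : ℝ → ℝ → ℝ) (hKm : Measurable (Function.uncurry K))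
    (hKnn : ∀ ς ϱ, 0 ≤ K ς ϱ) (hKsym : ∀ ς ϱ, K ς ϱ = K ϱ ς)
    (φ : ℝ → ℝ) (hφm : Measurable φ) (hφb : ∃ C, ∀ ς, |φ ς| ≤ C)
    (hint : IntegrableOn (fun p : ℝ × ℝ × ℝ => K p.1 p.2.1 * f p.1 p.2.2 * f p.2.1 p.2.2)
      (Set.Ioi 0 ×ˢ Set.Ioi 0 ×ˢ Set.Ioo 0 T)) :
    ∫ s in Set.Ioc (0:ℝ) τ, ∫ ς in Set.Ioi (0:ℝ), ∫ ϱ in Set.Ioo 0 ς,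
        (φ (ς - ϱ) - φ ς - φ ϱ) * (K ς ϱ * f ς s * f ϱ s)
      = ∫ ς in Set.Ioi (0:ℝ), φ ς *
          ((∫ s in Set.Ioc (0:ℝ) τ, ∫ ϱ in Set.Ioi (0:ℝ),
              K (ς + ϱ) ϱ * f (ς + ϱ) s * f ϱ s)
            - ∫ s in Set.Ioc (0:ℝ) τ, ∫ ϱ in Set.Ioi (0:ℝ), K ς ϱ * f ς s * f ϱ s) :=
  stmt_8_general T τ hτT f K hKsym φ hφm hφb hint
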